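/- arXiv:1811.05226 — 2 statements merged into one kernel-verified Lean document; each statement's English description precedes it below -/
import Mathlib

section
/- Let U be a block matrix U = [[A, C],[B, D]] (with square blocks of equal size n) satisfying U†ΓU = Γ where Γ = diag(1_n, -1_n). Then A is invertible, and setting Z = BA⁻¹, one has 1_n - Z†Z = (AA†)⁻¹; in particular 1_n - Z†Z is positive definite. -/
/-!
The top-left block of `U†ΓU = Γ` reads `A†A = 1 + B†B`, which is positive definite, so `A` is
invertible. Conjugating that identity by `A⁻¹` gives `1 - Z†Z = A†⁻¹ A⁻¹ = (AA†)⁻¹`, the inverse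
of the positive definite matrix `AA†`.
-/

open Matrix ComplexOrder

namespace Matrix

theorem fromBlocks_conjTranspose_mul_signature_mul {l m o p α : Type*} [Fintype m] [Fintype o]
    [DecidableEq m] [DecidableEq o] [Ring α] [StarRing α]
    (A : Matrix m l α) (C : Matrix m p α) (B : Matrix o l α) (D : Matrix o p α) :
    (fromBlocks A C B D)ᴴ * (fromBlocks 1 0 0 (-1) : Matrix (m ⊕ o) (m ⊕ o) α) *
        fromBlocks A C B D =
      fromBlocks (Aᴴ * A - Bᴴ * B) (Aᴴ * C - Bᴴ * D) (Cᴴ * A - Dᴴ * B) (Cᴴ * C - Dᴴ * D) := by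
  simp [fromBlocks_conjTranspose, fromBlocks_multiply, sub_eq_add_neg]

variable {m n K : Type*} [Fintype m] [Fintype n] [DecidableEq n]

theorem isUnit_of_conjTranspose_mul_self_sub_eq_one [Field K] [PartialOrder K] [StarRing K]
    [StarOrderedRing K] {A : Matrix n n K} {B : Matrix m n K} (h : Aᴴ * A - Bᴴ * B = 1) :
    IsUnit A := by
  have hpos : (Aᴴ * A).PosDef := by
    rw [sub_eq_iff_eq_add.mp h]
    exact PosDef.one.add_posSemidef (posSemidef_conjTranspose_mul_self B)
  have hdet := (isUnit_iff_isUnit_det _).mp hpos.isUnit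
  rw [det_mul] at hdet
  exact (isUnit_iff_isUnit_det A).mpr (isUnit_of_mul_isUnit_right hdet)

theorem one_sub_conjTranspose_mul_self_mul_inv [CommRing K] [StarRing K] {A : Matrix n n K}
    {B : Matrix m n K} (hA : IsUnit A) (h : Aᴴ * A - Bᴴ * B = 1) :
    1 - (B * A⁻¹)ᴴ * (B * A⁻¹) = (A * Aᴴ)⁻¹ := by
  have hAdet : IsUnit A.det := (isUnit_iff_isUnit_det A).mp hA
  have hAHdet : IsUnit Aᴴ.det := by rw [det_conjTranspose]; exact hAdet.star
  calc 1 - (B * A⁻¹)ᴴ * (B * A⁻¹)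
      = Aᴴ⁻¹ * (Aᴴ * A - Bᴴ * B) * A⁻¹ := by
        rw [conjTranspose_mul, conjTranspose_nonsing_inv]
        simp only [Matrix.mul_sub, Matrix.sub_mul, Matrix.mul_assoc]
        rw [mul_nonsing_inv A hAdet, Matrix.mul_one, ← Matrix.mul_assoc Aᴴ⁻¹,
          nonsing_inv_mul Aᴴ hAHdet]
    _ = (A * Aᴴ)⁻¹ := by rw [h, Matrix.mul_one, mul_inv_rev]

end Matrix

theorem block_pseudo_unitary_cartan {n : ℕ}
    (A B C D : Matrix (Fin n) (Fin n) ℂ)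
    (hU : (fromBlocks A C B D)ᴴ * (fromBlocks (1 : Matrix (Fin n) (Fin n) ℂ) 0 0 (-1)) *
            (fromBlocks A C B D)
          = fromBlocks (1 : Matrix (Fin n) (Fin n) ℂ) 0 0 (-1)) :
    IsUnit A ∧
    (1 - (B * A⁻¹)ᴴ * (B * A⁻¹) = (A * Aᴴ)⁻¹) ∧
    (1 - (B * A⁻¹)ᴴ * (B * A⁻¹)).PosDef := by
  rw [fromBlocks_conjTranspose_mul_signature_mul] at hU
  have h₁₁ : Aᴴ * A - Bᴴ * B = 1 := by simpa using congrArg toBlocks₁₁ hU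
  have hA : IsUnit A := isUnit_of_conjTranspose_mul_self_sub_eq_one h₁₁
  have hZ := one_sub_conjTranspose_mul_self_mul_inv hA h₁₁
  refine ⟨hA, hZ, ?_⟩
  rw [hZ]
  exact (PosDef.mul_conjTranspose_self A (vecMul_injective_iff_isUnit.mpr hA)).inv
end

section
/- Let U' = [[A', C'],[B', D']] satisfy U'†ΓU' = Γ with Γ = diag(1_n, -1_n), and let Z be in the Cartan domain (1 - Z†Z > 0). Then A'† - B'†Z is invertible, and Z' = (D'†Z - C'†)(A'† - B'†Z)⁻¹ again lies in the Cartan domain; moreover (A'† - B'†Z)† (1 - Z'†Z')(A'† - B'†Z) = 1 - Z†Z. -/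
open Matrix ComplexOrder

private lemma posDef_conj_aux {n : ℕ} {P M : Matrix (Fin n) (Fin n) ℂ}
    (hP : P.PosDef) (hM : IsUnit M) : (Mᴴ * P * M).PosDef := by
  refine Matrix.PosDef.of_dotProduct_mulVec_pos (Matrix.isHermitian_conjTranspose_mul_mul M hP.1) fun x hx => ?_
  have hx' : M *ᵥ x ≠ 0 :=
    ((Matrix.mulVec_injective_iff_isUnit.mpr hM).ne_iff' (Matrix.mulVec_zero M)).2 hx
  simpa only [star_mulVec, dotProduct_mulVec, vecMul_vecMul] using hP.dotProduct_mulVec_pos hx'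

theorem moebius_preserves_cartan {n : ℕ}
    (A B C D : Matrix (Fin n) (Fin n) ℂ)
    (hU : (fromBlocks A C B D)ᴴ * (fromBlocks 1 0 0 (-1) : Matrix (Fin n ⊕ Fin n) (Fin n ⊕ Fin n) ℂ) *
            (fromBlocks A C B D)
          = (fromBlocks 1 0 0 (-1) : Matrix (Fin n ⊕ Fin n) (Fin n ⊕ Fin n) ℂ))
    (Z : Matrix (Fin n) (Fin n) ℂ)
    (hZ : (1 - Zᴴ * Z).PosDef)
    (Z' : Matrix (Fin n) (Fin n) ℂ)
    (hZ' : Z' = (Dᴴ * Z - Cᴴ) * (Aᴴ - Bᴴ * Z)⁻¹) :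
    IsUnit (Aᴴ - Bᴴ * Z) ∧
    (1 - Z'ᴴ * Z').PosDef ∧
    (Aᴴ - Bᴴ * Z)ᴴ * (1 - Z'ᴴ * Z') * (Aᴴ - Bᴴ * Z) = 1 - Zᴴ * Z := by
  set U : Matrix (Fin n ⊕ Fin n) (Fin n ⊕ Fin n) ℂ := fromBlocks A C B D with hUdef
  set Γ : Matrix (Fin n ⊕ Fin n) (Fin n ⊕ Fin n) ℂ := fromBlocks 1 0 0 (-1) with hΓdef
  have hΓ2 : Γ * Γ = 1 := by
    simp [hΓdef, Matrix.fromBlocks_multiply, ← Matrix.fromBlocks_one]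
  -- derive U * Γ * Uᴴ = Γ
  have hleft : (Γ * Uᴴ * Γ) * U = 1 := by
    calc (Γ * Uᴴ * Γ) * U = Γ * (Uᴴ * Γ * U) := by noncomm_ring
    _ = Γ * Γ := by rw [hU]
    _ = 1 := hΓ2
  have hright : U * (Γ * Uᴴ * Γ) = 1 := mul_eq_one_comm.mp hleft
  have hU2 : U * Γ * Uᴴ = Γ := by
    have : U * Γ * Uᴴ * Γ = 1 := by rw [← hright]; noncomm_ring
    calc U * Γ * Uᴴ = (U * Γ * Uᴴ * Γ) * Γ := by
          conv_lhs => rw [← Matrix.mul_one (U * Γ * Uᴴ), ← hΓ2, ← Matrix.mul_assoc]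
    _ = Γ := by rw [this, Matrix.one_mul]
  -- block equations from U Γ Uᴴ = Γ
  rw [hUdef, hΓdef, Matrix.fromBlocks_conjTranspose, Matrix.fromBlocks_multiply,
    Matrix.fromBlocks_multiply] at hU2
  simp only [Matrix.mul_one, Matrix.mul_zero, Matrix.zero_mul, Matrix.one_mul,
    Matrix.mul_neg, Matrix.neg_mul, add_zero, zero_add, Matrix.fromBlocks_inj] at hU2
  obtain ⟨e1, e2, e3, e4⟩ := hU2
  -- e1 : A * Aᴴ + C * -Cᴴ-ish; normalize
  have f1 : A * Aᴴ - C * Cᴴ = 1 := by rw [sub_eq_iff_eq_add]; linear_combination (norm := noncomm_ring) e1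
  have f2 : A * Bᴴ - C * Dᴴ = 0 := by linear_combination (norm := noncomm_ring) e2
  have f3 : B * Aᴴ - D * Cᴴ = 0 := by linear_combination (norm := noncomm_ring) e3
  have f4 : B * Bᴴ - D * Dᴴ = -1 := by linear_combination (norm := noncomm_ring) e4
  set M := Aᴴ - Bᴴ * Z with hM
  set N := Dᴴ * Z - Cᴴ with hN
  have hMH : Mᴴ = A - Zᴴ * B := by
    simp [hM, Matrix.conjTranspose_sub, Matrix.conjTranspose_mul]
  have hNH : Nᴴ = Zᴴ * D - C := by
    simp [hN, Matrix.conjTranspose_sub, Matrix.conjTranspose_mul]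
  have key : Mᴴ * M - Nᴴ * N = 1 - Zᴴ * Z := by
    rw [hMH, hNH, hM, hN]
    have expand : (A - Zᴴ * B) * (Aᴴ - Bᴴ * Z) - (Zᴴ * D - C) * (Dᴴ * Z - Cᴴ)
        = (A * Aᴴ - C * Cᴴ) - (A * Bᴴ - C * Dᴴ) * Z - Zᴴ * (B * Aᴴ - D * Cᴴ)
          + Zᴴ * ((B * Bᴴ - D * Dᴴ) * Z) := by noncomm_ring
    rw [expand, f1, f2, f3, f4]
    noncomm_ring
  have keysum : Mᴴ * M = (1 - Zᴴ * Z) + Nᴴ * N := by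
    rw [← key]; noncomm_ring
  have hMMpd : (Mᴴ * M).PosDef := by
    rw [keysum]
    exact hZ.add_posSemidef (Matrix.posSemidef_conjTranspose_mul_self N)
  have hMunit : IsUnit M := by
    have hdet : IsUnit ((Mᴴ * M).det) := (Matrix.isUnit_iff_isUnit_det _).1 hMMpd.isUnit
    rw [Matrix.det_mul] at hdet
    exact (Matrix.isUnit_iff_isUnit_det _).2 (isUnit_of_mul_isUnit_right hdet)
  have hMdet : IsUnit M.det := Matrix.isUnit_iff_isUnit_det _ |>.1 hMunit
  have hMinv : M * M⁻¹ = 1 := Matrix.mul_nonsing_inv M hMdet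
  have hMinv' : M⁻¹ * M = 1 := Matrix.nonsing_inv_mul M hMdet
  have hZ'eq : Z' = N * M⁻¹ := hZ'
  have hform : 1 - Z'ᴴ * Z' = (M⁻¹)ᴴ * (1 - Zᴴ * Z) * M⁻¹ := by
    have hc : (M⁻¹)ᴴ * Mᴴ = 1 := by
      rw [← Matrix.conjTranspose_mul, hMinv, Matrix.conjTranspose_one]
    rw [← key, hZ'eq, Matrix.conjTranspose_mul]
    calc 1 - (M⁻¹)ᴴ * Nᴴ * (N * M⁻¹)
        = ((M⁻¹)ᴴ * Mᴴ) * (M * M⁻¹) - (M⁻¹)ᴴ * (Nᴴ * N) * M⁻¹ := by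
          rw [hc, hMinv]; noncomm_ring
      _ = (M⁻¹)ᴴ * (Mᴴ * M - Nᴴ * N) * M⁻¹ := by noncomm_ring
  refine ⟨hMunit, ?_, ?_⟩
  · rw [hform]
    exact posDef_conj_aux hZ (Matrix.isUnit_nonsing_inv_iff.mpr hMunit)
  · rw [hform]
    calc Mᴴ * ((M⁻¹)ᴴ * (1 - Zᴴ * Z) * M⁻¹) * M
        = (M⁻¹ * M)ᴴ * (1 - Zᴴ * Z) * (M⁻¹ * M) := by
          rw [Matrix.conjTranspose_mul]; noncomm_ring
      _ = 1 - Zᴴ * Z := by rw [hMinv', Matrix.conjTranspose_one, Matrix.one_mul, Matrix.mul_one]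
end
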